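/- arXiv:2010.00449 — 4 statements merged into one kernel-verified Lean document; each statement's English description precedes it below -/
import Mathlib

section
/- Let T_c > 0, let 0 < m ≤ 1, and let F : ℝ → ℝ be differentiable on (0, ∞) and continuous at 0. Let T > 0 and let V : [0, T] → ℝ be continuous with V(t) > 0 for all t ∈ [0, T), V(T) = 0, and suppose V is differentiable on [0, T) with V′(t) = −(1/(m·T_c))·(F′(V(t)^m))⁻¹·V(t)^(1−m) for all t ∈ [0, T), where F′(V(t)^m) ≠ 0. Then the settling time satisfies T = T_c·(F(V(0)^m) − F(0)). If moreover F(0) = 0 and F(y) < 1 for all y ≥ 0, then T < T_c, so the system converges to zero within the predefined time T_c. -/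
/-! Along the flow, `t + T_c · F(V(t)^m)` has derivative `1 + T_c · F'(V^m) · m V^(m-1) · V' = 0`,
since the prescribed `V'` is exactly the one cancelling the `1`. Hence this quantity is constant
on `[0, T]`; comparing its values at `0` and at the settling time `T`, where `V(T)^m = 0`, gives
`T = T_c (F(V(0)^m) − F(0))`, and `F < 1` on `[0, ∞)` with `F(0) = 0` turns this into `T < T_c`. -/

open Set Filter

theorem continuousOn_Ici_of_differentiableOn_Ioi {E : Type*} [NormedAddCommGroup E]
    [NormedSpace ℝ E] {F : ℝ → E} {a : ℝ} (hF : DifferentiableOn ℝ F (Ioi a))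
    (hFa : ContinuousAt F a) : ContinuousOn F (Ici a) := by
  intro x hx
  rcases (mem_Ici.mp hx).eq_or_lt with rfl | hax
  · exact hFa.continuousWithinAt
  · exact (hF.differentiableAt (Ioi_mem_nhds hax)).continuousAt.continuousWithinAt

theorem hasDerivWithinAt_mul_comp_rpow_add_id {Tc m : ℝ} (hTc : Tc ≠ 0) (hm : m ≠ 0)
    {F V : ℝ → ℝ} {s : Set ℝ} {t : ℝ} (hVt : 0 < V t) (hF : DifferentiableAt ℝ F (V t ^ m))
    (hF' : deriv F (V t ^ m) ≠ 0)
    (hV : HasDerivWithinAt V (-(1 / (m * Tc)) * (deriv F (V t ^ m))⁻¹ * V t ^ (1 - m)) s t) :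
    HasDerivWithinAt (fun t => Tc * F (V t ^ m) + t) 0 s t := by
  have hVm := (hF.hasDerivAt.comp_hasDerivWithinAt t (hV.rpow_const (Or.inl hVt.ne'))).const_mul Tc
  refine (hVm.add (hasDerivWithinAt_id t s)).congr_deriv ?_
  have hpow : V t ^ (1 - m) * V t ^ (m - 1) = 1 := by
    rw [← Real.rpow_add hVt, sub_add_sub_cancel, sub_self, Real.rpow_zero]
  field_simp
  linear_combination -hpow

theorem settlingTime_eq {Tc m : ℝ} (hTc : Tc ≠ 0) (hm : 0 < m) {F : ℝ → ℝ}
    (hF : DifferentiableOn ℝ F (Ioi 0)) (hFc : ContinuousAt F 0) {T : ℝ} (hT : 0 ≤ T)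
    {V : ℝ → ℝ} (hVc : ContinuousOn V (Icc 0 T)) (hVpos : ∀ t ∈ Ico (0 : ℝ) T, 0 < V t)
    (hVT : V T = 0) (hF' : ∀ t ∈ Ico (0 : ℝ) T, deriv F (V t ^ m) ≠ 0)
    (hV : ∀ t ∈ Ico (0 : ℝ) T, HasDerivWithinAt V
      (-(1 / (m * Tc)) * (deriv F (V t ^ m))⁻¹ * V t ^ (1 - m)) (Ico (0 : ℝ) T) t) :
    T = Tc * (F (V 0 ^ m) - F 0) := by
  have hVnonneg : ∀ t ∈ Icc (0 : ℝ) T, 0 ≤ V t := by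
    intro t ht
    rcases ht.2.eq_or_lt with rfl | htT
    · exact hVT.ge
    · exact (hVpos t ⟨ht.1, htT⟩).le
  have hcont : ContinuousOn (fun t => Tc * F (V t ^ m) + t) (Icc 0 T) :=
    (continuousOn_const.mul ((continuousOn_Ici_of_differentiableOn_Ioi hF hFc).comp
      (hVc.rpow_const fun _ _ => Or.inr hm.le)
      fun t ht => Real.rpow_nonneg (hVnonneg t ht) m)).add continuousOn_id
  have hderiv : ∀ t ∈ Ico (0 : ℝ) T,
      HasDerivWithinAt (fun t => Tc * F (V t ^ m) + t) 0 (Ici t) t := by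
    intro t ht
    have hVt := hVpos t ht
    refine (hasDerivWithinAt_mul_comp_rpow_add_id hTc hm.ne' hVt
      (hF.differentiableAt (Ioi_mem_nhds (Real.rpow_pos_of_pos hVt m))) (hF' t ht)
      (hV t ht)).mono_of_mem_nhdsWithin ?_
    exact mem_of_superset (Ico_mem_nhdsGE ht.2) (Ico_subset_Ico_left ht.1)
  have hconst := constant_of_has_deriv_right_zero hcont hderiv T ⟨hT, le_rfl⟩
  simp only [hVT, Real.zero_rpow hm.ne'] at hconst
  linarith

theorem stmt_5_general (Tc m : ℝ) (hTc : 0 < Tc) (hm0 : 0 < m)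
    (F : ℝ → ℝ) (hF : DifferentiableOn ℝ F (Set.Ioi 0)) (hFc : ContinuousAt F 0)
    (T : ℝ) (hT : 0 < T) (V : ℝ → ℝ)
    (hVc : ContinuousOn V (Set.Icc 0 T))
    (hVpos : ∀ t ∈ Set.Ico (0 : ℝ) T, 0 < V t)
    (hVT : V T = 0)
    (hF' : ∀ t ∈ Set.Ico (0 : ℝ) T, deriv F (V t ^ m) ≠ 0)
    (hV : ∀ t ∈ Set.Ico (0 : ℝ) T, HasDerivWithinAt V
      (-(1 / (m * Tc)) * (deriv F (V t ^ m))⁻¹ * V t ^ (1 - m)) (Set.Ico (0 : ℝ) T) t) :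
    T = Tc * (F (V 0 ^ m) - F 0) ∧
    (F 0 = 0 → (∀ y : ℝ, 0 ≤ y → F y < 1) → T < Tc) := by
  have hTeq := settlingTime_eq hTc.ne' hm0 hF hFc hT.le hVc hVpos hVT hF' hV
  refine ⟨hTeq, fun hF0 hF1 => ?_⟩
  have hFV0 : F (V 0 ^ m) < 1 := hF1 _ (Real.rpow_nonneg (hVpos 0 ⟨le_rfl, hT⟩).le m)
  rw [hTeq, hF0, sub_zero]
  simpa using mul_lt_mul_of_pos_left hFV0 hTc

/-- If `V` is continuous on `[0, T]`, positive on `[0, T)`, vanishes at `T`,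
and satisfies `V'(t) = −(1/(m·T_c))·(F'(V(t)^m))⁻¹·V(t)^(1−m)` on `[0, T)` (with `F`
differentiable on `(0,∞)`, continuous at `0`, and `F'(V(t)^m) ≠ 0`), then the settling
time satisfies `T = T_c·(F(V(0)^m) − F(0))`; and if moreover `F(0) = 0` and `F(y) < 1`
for all `y ≥ 0`, then `T < T_c`. -/
theorem stmt_5 (Tc m : ℝ) (hTc : 0 < Tc) (hm0 : 0 < m) (hm1 : m ≤ 1)
    (F : ℝ → ℝ) (hF : DifferentiableOn ℝ F (Set.Ioi 0)) (hFc : ContinuousAt F 0)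
    (T : ℝ) (hT : 0 < T) (V : ℝ → ℝ)
    (hVc : ContinuousOn V (Set.Icc 0 T))
    (hVpos : ∀ t ∈ Set.Ico (0 : ℝ) T, 0 < V t)
    (hVT : V T = 0)
    (hF' : ∀ t ∈ Set.Ico (0 : ℝ) T, deriv F (V t ^ m) ≠ 0)
    (hV : ∀ t ∈ Set.Ico (0 : ℝ) T, HasDerivWithinAt V
      (-(1 / (m * Tc)) * (deriv F (V t ^ m))⁻¹ * V t ^ (1 - m)) (Set.Ico (0 : ℝ) T) t) :
    T = Tc * (F (V 0 ^ m) - F 0) ∧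
    (F 0 = 0 → (∀ y : ℝ, 0 ≤ y → F y < 1) → T < Tc) :=
  stmt_5_general Tc m hTc hm0 F hF hFc T hT V hVc hVpos hVT hF' hV
end

section
/- Let T_c > 0 and 0 < m < 1. If x : ℝ → ℝ is differentiable at t₀ with x(t₀) < 0 and x′(t₀) = −(1/(m·T_c))·exp(|x(t₀)|^m)·|x(t₀)|^(1−m), then the function t ↦ |x(t)| is differentiable at t₀ with derivative (1/(m·T_c))·exp(|x(t₀)|^m)·|x(t₀)|^(1−m) > 0. Hence along the scalar system ẋ = −(1/(m·T_c))·exp(|x|^m)·|x|^(1−m) the distance to the origin strictly increases for negative states, and the system is not stable for x < 0. -/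
theorem stmt_6_general (Tc m : ℝ) (hTc : 0 < Tc) (hm0 : 0 < m)
    (x : ℝ → ℝ) (t₀ : ℝ) (hneg : x t₀ < 0)
    (hx : HasDerivAt x
      (-(1 / (m * Tc)) * Real.exp (|x t₀| ^ m) * |x t₀| ^ (1 - m)) t₀) :
    HasDerivAt (fun t => |x t|)
      ((1 / (m * Tc)) * Real.exp (|x t₀| ^ m) * |x t₀| ^ (1 - m)) t₀ ∧
    0 < (1 / (m * Tc)) * Real.exp (|x t₀| ^ m) * |x t₀| ^ (1 - m) := by
  have habs_pos : 0 < |x t₀| := abs_pos.mpr hneg.ne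
  refine ⟨?_, by positivity⟩
  simpa only [Function.comp_def, neg_mul, one_mul, neg_neg] using
    (hasDerivAt_abs_neg hneg).comp t₀ hx

/-- If `x : ℝ → ℝ` is differentiable at `t₀` with `x(t₀) < 0` and
`x'(t₀) = −(1/(m·T_c))·exp(|x(t₀)|^m)·|x(t₀)|^(1−m)`, then `t ↦ |x(t)|` is differentiable
at `t₀` with derivative `(1/(m·T_c))·exp(|x(t₀)|^m)·|x(t₀)|^(1−m)`, which is positive:
the distance to the origin strictly increases for negative states. -/
theorem stmt_6 (Tc m : ℝ) (hTc : 0 < Tc) (hm0 : 0 < m) (hm1 : m < 1)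
    (x : ℝ → ℝ) (t₀ : ℝ) (hneg : x t₀ < 0)
    (hx : HasDerivAt x
      (-(1 / (m * Tc)) * Real.exp (|x t₀| ^ m) * |x t₀| ^ (1 - m)) t₀) :
    HasDerivAt (fun t => |x t|)
      ((1 / (m * Tc)) * Real.exp (|x t₀| ^ m) * |x t₀| ^ (1 - m)) t₀ ∧
    0 < (1 / (m * Tc)) * Real.exp (|x t₀| ^ m) * |x t₀| ^ (1 - m) :=
  stmt_6_general Tc m hTc hm0 x t₀ hneg hx
end

section
/- Let T_c > 0, let 0 < m ≤ 1, and let F : ℝ → ℝ be differentiable on (0, ∞) with F′ > 0 there, continuous at 0, with F(0) = 0 and F(y) < 1 for all y ≥ 0. Let T > 0 and let s : [0, T] → ℝⁿ be continuous with s(t) ≠ 0 for t ∈ [0, T), s(T) = 0, differentiable on [0, T) with s′(t) = −(1/(m·T_c))·(F′(‖s(t)‖^m))⁻¹·s(t)/‖s(t)‖^m for all t ∈ [0, T). Then the reaching time satisfies T = T_c·F(‖s(0)‖^m), and in particular T < T_c: the sliding variable reaches zero within the predefined time T_c. -/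
/-!
Along the reaching law, `d/dt ‖s‖^m = m · c · ‖s‖^m` where `c` is the scalar factor of the law, so
the factors `m`, `F'(‖s‖^m)` and `‖s‖^m` cancel and `t ↦ F(‖s t‖^m)` decreases at the constant rate
`1 / T_c`. Since it equals `F 0 = 0` at the reaching time, `T = T_c · F(‖s 0‖^m) < T_c`.
-/

open Set

theorem eq_add_mul_sub_of_hasDerivWithinAt_Ico {g : ℝ → ℝ} {a b k : ℝ} (hab : a ≤ b)
    (hcont : ContinuousOn g (Icc a b)) (hderiv : ∀ x ∈ Ico a b, HasDerivWithinAt g k (Ico a b) x) :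
    g b = g a + k * (b - a) := by
  refine eq_of_has_deriv_right_eq (f' := fun _ => k) (g := fun x => g a + k * (x - a))
    (fun x hx => ?_) (fun x _ => ?_) hcont (by fun_prop) (by ring) b (right_mem_Icc.mpr hab)
  · exact (hderiv x hx).mono_of_mem_nhdsWithin (Ico_mem_nhdsGE_of_mem hx)
  · simpa using ((hasDerivWithinAt_id x (Ici x)).sub_const a).const_mul k |>.const_add (g a)

theorem continuousOn_Ici_of_continuousAt_of_differentiableOn_Ioi {F : ℝ → ℝ} {a : ℝ}
    (hFa : ContinuousAt F a) (hF : DifferentiableOn ℝ F (Ioi a)) : ContinuousOn F (Ici a) := by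
  intro y hy
  rcases (mem_Ici.mp hy).eq_or_lt with rfl | hay
  · exact hFa.continuousWithinAt
  · exact (hF.differentiableAt (Ioi_mem_nhds hay)).continuousAt.continuousWithinAt

section

variable {E : Type*} [NormedAddCommGroup E] [InnerProductSpace ℝ E]

theorem HasDerivWithinAt.norm_rpow_of_eq_smul {f : ℝ → E} {c t : ℝ} {S : Set ℝ}
    (hf : HasDerivWithinAt f (c • f t) S t) (hft : f t ≠ 0) (m : ℝ) :
    HasDerivWithinAt (fun u => ‖f u‖ ^ m) (m * c * ‖f t‖ ^ m) S t := by
  have hnorm : 0 < ‖f t‖ := norm_pos_iff.mpr hft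
  have hrpow : ∀ u, (‖f u‖ ^ 2) ^ (m / 2) = ‖f u‖ ^ m := fun u => by
    rw [← Real.rpow_natCast_mul (norm_nonneg _)]; ring_nf
  -- `‖·‖ ^ 2` is smooth everywhere, so differentiate `‖f‖ ^ m` as `(‖f‖ ^ 2) ^ (m / 2)`.
  have h := hf.norm_sq.rpow_const (p := m / 2) (Or.inl (by positivity))
  simp only [hrpow] at h
  convert h using 1
  rw [real_inner_smul_right, real_inner_self_eq_norm_sq, ← Real.rpow_natCast,
    ← Real.rpow_mul (norm_nonneg _)]
  have hsplit : ‖f t‖ ^ m = ‖f t‖ ^ ((2 : ℕ) : ℝ) * ‖f t‖ ^ ((2 : ℕ) * (m / 2 - 1) : ℝ) := by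
    rw [← Real.rpow_add hnorm]; ring_nf
  rw [hsplit]; ring

theorem hasDerivWithinAt_comp_norm_rpow_of_reachingLaw {F : ℝ → ℝ} {F' Tc m t : ℝ} {s : ℝ → E}
    {S : Set ℝ} (hTc : Tc ≠ 0) (hm : m ≠ 0) (hst : s t ≠ 0) (hF : HasDerivAt F F' (‖s t‖ ^ m)) (hF' : F' ≠ 0)
    (hs : HasDerivWithinAt s ((-(1 / (m * Tc)) * F'⁻¹ * (‖s t‖ ^ m)⁻¹) • s t) S t) :
    HasDerivWithinAt (fun u => F (‖s u‖ ^ m)) (-(1 / Tc)) S t := by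
  have hy : ‖s t‖ ^ m ≠ 0 := (Real.rpow_pos_of_pos (norm_pos_iff.mpr hst) m).ne'
  exact (hF.comp_hasDerivWithinAt t (hs.norm_rpow_of_eq_smul hst m)).congr_deriv (by field_simp)

end

theorem stmt_14_general (n : ℕ) (Tc m : ℝ) (hTc : 0 < Tc) (hm0 : 0 < m)
    (F : ℝ → ℝ) (hF : DifferentiableOn ℝ F (Set.Ioi 0))
    (hF' : ∀ y : ℝ, 0 < y → 0 < deriv F y)
    (hFc : ContinuousAt F 0) (hF0 : F 0 = 0) (hF1 : ∀ y : ℝ, 0 ≤ y → F y < 1)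
    (T : ℝ) (hT : 0 < T) (s : ℝ → EuclideanSpace ℝ (Fin n))
    (hsc : ContinuousOn s (Set.Icc 0 T))
    (hsne : ∀ t ∈ Set.Ico (0 : ℝ) T, s t ≠ 0)
    (hsT : s T = 0)
    (hs : ∀ t ∈ Set.Ico (0 : ℝ) T, HasDerivWithinAt s
      ((-(1 / (m * Tc)) * (deriv F (‖s t‖ ^ m))⁻¹ * (‖s t‖ ^ m)⁻¹) • s t)
      (Set.Ico (0 : ℝ) T) t) :
    T = Tc * F (‖s 0‖ ^ m) ∧ T < Tc := by
  have hV_cont : ContinuousOn (fun t => F (‖s t‖ ^ m)) (Icc 0 T) :=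
    (continuousOn_Ici_of_continuousAt_of_differentiableOn_Ioi hFc hF).comp
      (hsc.norm.rpow_const fun _ _ => Or.inr hm0.le) fun _ _ => Real.rpow_nonneg (norm_nonneg _) m
  have hV_deriv :
      ∀ t ∈ Ico 0 T, HasDerivWithinAt (fun t => F (‖s t‖ ^ m)) (-(1 / Tc)) (Ico 0 T) t := by
    intro t ht
    have hy : 0 < ‖s t‖ ^ m := Real.rpow_pos_of_pos (norm_pos_iff.mpr (hsne t ht)) m
    exact hasDerivWithinAt_comp_norm_rpow_of_reachingLaw hTc.ne' hm0.ne' (hsne t ht)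
      (hF.differentiableAt (Ioi_mem_nhds hy)).hasDerivAt (hF' _ hy).ne' (hs t ht)
  have hV := eq_add_mul_sub_of_hasDerivWithinAt_Ico hT.le hV_cont hV_deriv
  simp only [hsT, norm_zero, Real.zero_rpow hm0.ne', hF0] at hV
  have hreach : T = Tc * F (‖s 0‖ ^ m) := by field_simp at hV; linarith
  refine ⟨hreach, hreach ▸ ?_⟩
  exact mul_lt_of_lt_one_right hTc (hF1 _ (Real.rpow_nonneg (norm_nonneg _) m))

/-- Let `F` be differentiable on `(0, ∞)` with `F' > 0` there, continuous
at `0`, with `F(0) = 0` and `F(y) < 1` for all `y ≥ 0`. If the sliding variable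
`s : [0, T] → ℝⁿ` is continuous, nonzero on `[0, T)`, vanishes at `T`, and obeys the
predefined-time reaching law `s'(t) = −(1/(m·T_c))·(F'(‖s(t)‖^m))⁻¹·s(t)/‖s(t)‖^m` on
`[0, T)`, then the reaching time satisfies `T = T_c·F(‖s(0)‖^m)` and `T < T_c`. -/
theorem stmt_14 (n : ℕ) (Tc m : ℝ) (hTc : 0 < Tc) (hm0 : 0 < m) (hm1 : m ≤ 1)
    (F : ℝ → ℝ) (hF : DifferentiableOn ℝ F (Set.Ioi 0))
    (hF' : ∀ y : ℝ, 0 < y → 0 < deriv F y)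
    (hFc : ContinuousAt F 0) (hF0 : F 0 = 0) (hF1 : ∀ y : ℝ, 0 ≤ y → F y < 1)
    (T : ℝ) (hT : 0 < T) (s : ℝ → EuclideanSpace ℝ (Fin n))
    (hsc : ContinuousOn s (Set.Icc 0 T))
    (hsne : ∀ t ∈ Set.Ico (0 : ℝ) T, s t ≠ 0)
    (hsT : s T = 0)
    (hs : ∀ t ∈ Set.Ico (0 : ℝ) T, HasDerivWithinAt s
      ((-(1 / (m * Tc)) * (deriv F (‖s t‖ ^ m))⁻¹ * (‖s t‖ ^ m)⁻¹) • s t)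
      (Set.Ico (0 : ℝ) T) t) :
    T = Tc * F (‖s 0‖ ^ m) ∧ T < Tc :=
  stmt_14_general n Tc m hTc hm0 F hF hF' hFc hF0 hF1 T hT s hsc hsne hsT hs
end

section
/- Let T_c > 0, let 0 < m ≤ 1, let F : ℝ → ℝ, and let d ∈ ℝⁿ. Let s : ℝ → ℝⁿ be differentiable at t₀ with s(t₀) ≠ 0 and F′(‖s(t₀)‖^m) > 0, and suppose s′(t₀) = −(1/(m·T_c))·(F′(‖s(t₀)‖^m))⁻¹·s(t₀)/‖s(t₀)‖^m + d − ‖d‖·sign(s(t₀)), where sign is applied componentwise. Then t ↦ ‖s(t)‖ is differentiable at t₀ and its derivative satisfies (d/dt)‖s(t)‖|_{t=t₀} ≤ −(1/(m·T_c))·(F′(‖s(t₀)‖^m))⁻¹·‖s(t₀)‖^(1−m) < 0. Hence under the controller with the exact robust compensation term, the Lyapunov function ‖s‖ decreases at the predefined-time rate despite the disturbance d. -/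
/-!
Along the trajectory, `d/dt ‖s‖ = ⟪s, ṡ⟫ / ‖s‖`. Inserting the closed-loop dynamics, the
disturbance contributes `⟪s, d⟫ - ‖d‖ ⟪s, sign s⟫ ≤ ‖s‖ ‖d‖ - ‖d‖ ‖s‖₁ ≤ 0`, because the
Euclidean norm is dominated by the `ℓ¹` norm `⟪s, sign s⟫`. What is left is the nominal term
`c ‖s‖` with `c = -(m T_c)⁻¹ F'(‖s‖^m)⁻¹ ‖s‖^(-m)`, which equals the predefined-time rate and
is negative because `F'(‖s‖^m) > 0`.
-/

open Finset
open scoped RealInnerProductSpace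

/-- The componentwise sign vector of `s ∈ ℝⁿ`. -/
noncomputable def signVec {n : ℕ} (s : EuclideanSpace ℝ (Fin n)) :
    EuclideanSpace ℝ (Fin n) :=
  WithLp.toLp 2 (fun i => Real.sign (s i))

theorem EuclideanSpace.norm_le_sum_abs {ι : Type*} [Fintype ι] (x : EuclideanSpace ℝ ι) :
    ‖x‖ ≤ ∑ i, |x i| := by
  rw [EuclideanSpace.norm_eq]
  refine Real.sqrt_le_iff.2 ⟨sum_nonneg fun i _ => abs_nonneg _, ?_⟩
  calc ∑ i, ‖x i‖ ^ 2 = ∑ i, |x i| ^ 2 := by simp only [Real.norm_eq_abs]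
    _ ≤ (∑ i, |x i|) ^ 2 := sum_sq_le_sq_sum_of_nonneg fun i _ => abs_nonneg _

theorem inner_signVec_eq_sum_abs {n : ℕ} (x : EuclideanSpace ℝ (Fin n)) :
    ⟪x, signVec x⟫ = ∑ i, |x i| := by
  rw [PiLp.inner_apply]
  refine sum_congr rfl fun i _ => ?_
  simp only [RCLike.inner_apply, conj_trivial, signVec, PiLp.toLp_apply]
  rcases lt_trichotomy (x i) 0 with h | h | h
  · rw [Real.sign_of_neg h, abs_of_neg h]; ring
  · simp [h]
  · rw [Real.sign_of_pos h, abs_of_pos h]; ring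

theorem norm_le_inner_signVec {n : ℕ} (x : EuclideanSpace ℝ (Fin n)) :
    ‖x‖ ≤ ⟪x, signVec x⟫ :=
  inner_signVec_eq_sum_abs x ▸ EuclideanSpace.norm_le_sum_abs x

theorem inner_smul_add_sub_norm_smul_signVec_le {n : ℕ} (c : ℝ)
    (x d : EuclideanSpace ℝ (Fin n)) :
    ⟪x, c • x + d - ‖d‖ • signVec x⟫ ≤ c * ‖x‖ ^ 2 := by
  rw [inner_sub_right, inner_add_right, real_inner_smul_right, real_inner_smul_right,
    real_inner_self_eq_norm_sq]
  have hd : ⟪x, d⟫ ≤ ‖x‖ * ‖d‖ := real_inner_le_norm x d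
  have hsign : ‖x‖ * ‖d‖ ≤ ‖d‖ * ⟪x, signVec x⟫ := by
    rw [mul_comm]
    exact mul_le_mul_of_nonneg_left (norm_le_inner_signVec x) (norm_nonneg d)
  linarith

section NormDeriv

variable {E : Type*} [NormedAddCommGroup E] [InnerProductSpace ℝ E]

theorem HasDerivAt.norm_of_ne_zero {f : ℝ → E} {f' : E} {t : ℝ} (hf : HasDerivAt f f' t)
    (h0 : f t ≠ 0) : HasDerivAt (fun t => ‖f t‖) (⟪f t, f'⟫ / ‖f t‖) t := by
  have hpos : 0 < ‖f t‖ := norm_pos_iff.2 h0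
  have hsqrt := hf.norm_sq.sqrt (by positivity)
  simp only [Real.sqrt_sq (norm_nonneg _)] at hsqrt
  convert hsqrt using 1
  field_simp

theorem deriv_norm_le_of_inner_le {f : ℝ → E} {f' : E} {t c : ℝ}
    (hf : HasDerivAt f f' t) (h0 : f t ≠ 0) (hc : ⟪f t, f'⟫ ≤ c * ‖f t‖ ^ 2) :
    deriv (fun t => ‖f t‖) t ≤ c * ‖f t‖ := by
  rw [(hf.norm_of_ne_zero h0).deriv, div_le_iff₀ (norm_pos_iff.2 h0)]
  linarith

end NormDeriv

theorem mul_rpow_inv_mul_self {x : ℝ} (hx : 0 < x) (a m : ℝ) :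
    a * (x ^ m)⁻¹ * x = a * x ^ (1 - m) := by
  rw [Real.rpow_sub hx, Real.rpow_one]
  field_simp

theorem stmt_16_general (n : ℕ) (Tc m : ℝ) (hTc : 0 < Tc) (hm0 : 0 < m)
    (F : ℝ → ℝ) (d : EuclideanSpace ℝ (Fin n))
    (s : ℝ → EuclideanSpace ℝ (Fin n)) (t₀ : ℝ)
    (hs0 : s t₀ ≠ 0)
    (hF' : 0 < deriv F (‖s t₀‖ ^ m))
    (hs : HasDerivAt s
      ((-(1 / (m * Tc)) * (deriv F (‖s t₀‖ ^ m))⁻¹ * (‖s t₀‖ ^ m)⁻¹) • s t₀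
        + d - ‖d‖ • signVec (s t₀)) t₀) :
    DifferentiableAt ℝ (fun t => ‖s t‖) t₀ ∧
    deriv (fun t => ‖s t‖) t₀
      ≤ -(1 / (m * Tc)) * (deriv F (‖s t₀‖ ^ m))⁻¹ * ‖s t₀‖ ^ (1 - m) ∧
    -(1 / (m * Tc)) * (deriv F (‖s t₀‖ ^ m))⁻¹ * ‖s t₀‖ ^ (1 - m) < 0 := by
  have hpos : 0 < ‖s t₀‖ := norm_pos_iff.2 hs0
  refine ⟨(hs.norm_of_ne_zero hs0).differentiableAt, ?_, ?_⟩
  · rw [← mul_rpow_inv_mul_self hpos]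
    exact deriv_norm_le_of_inner_le hs hs0 (inner_smul_add_sub_norm_smul_signVec_le _ _ _)
  · have hrate : 0 < 1 / (m * Tc) * (deriv F (‖s t₀‖ ^ m))⁻¹ * ‖s t₀‖ ^ (1 - m) := by
      positivity
    linarith

/-- If the sliding variable `s` is differentiable at `t₀` with `s(t₀) ≠ 0`,
`F'(‖s(t₀)‖^m) > 0`, and closed-loop dynamics
`s'(t₀) = −(1/(m·T_c))·(F'(‖s(t₀)‖^m))⁻¹·s(t₀)/‖s(t₀)‖^m + d − ‖d‖·sign(s(t₀))`
(with componentwise sign and matched disturbance `d`), then `t ↦ ‖s(t)‖` is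
differentiable at `t₀` with derivative at most
`−(1/(m·T_c))·(F'(‖s(t₀)‖^m))⁻¹·‖s(t₀)‖^(1−m) < 0`: the Lyapunov function `‖s‖`
decreases at the predefined-time rate despite the disturbance. -/
theorem stmt_16 (n : ℕ) (Tc m : ℝ) (hTc : 0 < Tc) (hm0 : 0 < m) (hm1 : m ≤ 1)
    (F : ℝ → ℝ) (d : EuclideanSpace ℝ (Fin n))
    (s : ℝ → EuclideanSpace ℝ (Fin n)) (t₀ : ℝ)
    (hs0 : s t₀ ≠ 0)
    (hF' : 0 < deriv F (‖s t₀‖ ^ m))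
    (hs : HasDerivAt s
      ((-(1 / (m * Tc)) * (deriv F (‖s t₀‖ ^ m))⁻¹ * (‖s t₀‖ ^ m)⁻¹) • s t₀
        + d - ‖d‖ • signVec (s t₀)) t₀) :
    DifferentiableAt ℝ (fun t => ‖s t‖) t₀ ∧
    deriv (fun t => ‖s t‖) t₀
      ≤ -(1 / (m * Tc)) * (deriv F (‖s t₀‖ ^ m))⁻¹ * ‖s t₀‖ ^ (1 - m) ∧
    -(1 / (m * Tc)) * (deriv F (‖s t₀‖ ^ m))⁻¹ * ‖s t₀‖ ^ (1 - m) < 0 :=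
  stmt_16_general n Tc m hTc hm0 F d s t₀ hs0 hF' hs
end
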